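/- Let X = [[0,1],[1,0]] and Z = [[1,0],[0,-1]] be the Pauli matrices over ℂ, let U(φ) = (1/√2)·[[1, −1], [e^{iφ}, e^{iφ}]] for real φ, and fix m ≥ 1. Given a signer key T : Fin m → {0,1}×{0,1} with T j = (aⱼ,bⱼ) and a verifier key T′ : Fin m → {0,1}×{0,1} with T′ j = (cⱼ,dⱼ), define the m-qubit matrices, all indexed by (Fin m → Fin 2) and given entrywise as products over j of the corresponding single-qubit matrices: E_T with per-qubit factor X^{bⱼ} Z^{aⱼ}, D_T with factor Z^{aⱼ} X^{bⱼ}, E_{T′} with factor X^{dⱼ} Z^{cⱼ}, D_{T′} with factor Z^{cⱼ} X^{dⱼ}, 𝒰 with factor U(φ), and 𝒰ᴴ its conjugate transpose. Then for every φ ∈ ℝ, D_{T′} · E_{T′} · 𝒰ᴴ · D_T · E_T · 𝒰 = 1, the identity matrix on ℂ^{2^m}. Hence for every m-qubit message |P⟩, the full signing-and-verification procedure of the quantum identity-based signature scheme returns exactly |P⟩, i.e., every honestly generated signature is accepted as valid. -/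
import Mathlib


open Matrix Complex

/-- The Pauli `X` matrix. -/
def pauliX : Matrix (Fin 2) (Fin 2) ℂ := !![0, 1; 1, 0]

/-- The Pauli `Z` matrix. -/
def pauliZ : Matrix (Fin 2) (Fin 2) ℂ := !![1, 0; 0, -1]

/-- The signing unitary `U(φ) = (1/√2) · [[1, −1], [e^{iφ}, e^{iφ}]]`
used in the quantum identity-based signature scheme. -/
noncomputable def Uphi (φ : ℝ) : Matrix (Fin 2) (Fin 2) ℂ :=
  (1 / (Real.sqrt 2 : ℂ)) •
    !![(1 : ℂ), -1; Complex.exp (I * φ), Complex.exp (I * φ)]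

/-- The `m`-qubit quantum one-time-pad encryption matrix for key `T`,
the `m`-fold tensor product of the single-qubit operators `X^{bⱼ} · Z^{aⱼ}`. -/
noncomputable def qotpEnc (m : ℕ) (T : Fin m → Fin 2 × Fin 2) :
    Matrix (Fin m → Fin 2) (Fin m → Fin 2) ℂ :=
  fun v w => ∏ j : Fin m,
    (pauliX ^ ((T j).2 : ℕ) * pauliZ ^ ((T j).1 : ℕ)) (v j) (w j)

/-- The `m`-qubit quantum one-time-pad decryption matrix for key `T`,
the `m`-fold tensor product of the single-qubit operators `Z^{aⱼ} · X^{bⱼ}`. -/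
noncomputable def qotpDec (m : ℕ) (T : Fin m → Fin 2 × Fin 2) :
    Matrix (Fin m → Fin 2) (Fin m → Fin 2) ℂ :=
  fun v w => ∏ j : Fin m,
    (pauliZ ^ ((T j).1 : ℕ) * pauliX ^ ((T j).2 : ℕ)) (v j) (w j)

/-- The `m`-fold tensor product `U(φ)^{⊗ m}` of the signing unitary. -/
noncomputable def UphiTensor (m : ℕ) (φ : ℝ) :
    Matrix (Fin m → Fin 2) (Fin m → Fin 2) ℂ :=
  fun v w => ∏ j : Fin m, Uphi φ (v j) (w j)

/-- General `m`-fold tensor product of single-qubit matrices. -/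
noncomputable def qtensor (m : ℕ) (A : Fin m → Matrix (Fin 2) (Fin 2) ℂ) :
    Matrix (Fin m → Fin 2) (Fin m → Fin 2) ℂ :=
  fun v w => ∏ j : Fin m, A j (v j) (w j)

lemma qtensor_mul (m : ℕ) (A B : Fin m → Matrix (Fin 2) (Fin 2) ℂ) :
    qtensor m A * qtensor m B = qtensor m (fun j => A j * B j) := by
  ext v w
  simp only [qtensor, Matrix.mul_apply]
  rw [Finset.prod_univ_sum, Fintype.piFinset_univ]
  exact Finset.sum_congr rfl fun u _ => (Finset.prod_mul_distrib).symm

lemma qtensor_conjTranspose (m : ℕ) (A : Fin m → Matrix (Fin 2) (Fin 2) ℂ) :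
    (qtensor m A)ᴴ = qtensor m (fun j => (A j)ᴴ) := by
  ext v w
  simp [qtensor, conjTranspose_apply, map_prod]

lemma qtensor_one (m : ℕ) :
    qtensor m (fun _ => (1 : Matrix (Fin 2) (Fin 2) ℂ)) = 1 := by
  ext v w
  simp only [qtensor, Matrix.one_apply]
  by_cases h : v = w
  · simp [h]
  · obtain ⟨j, hj⟩ := Function.ne_iff.mp h
    rw [if_neg h]
    exact Finset.prod_eq_zero (Finset.mem_univ j) (if_neg hj)

lemma pauliX_sq : pauliX * pauliX = 1 := by
  ext i j; fin_cases i <;> fin_cases j <;>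
    simp [pauliX, Matrix.mul_apply, Fin.sum_univ_two, Matrix.one_apply]

lemma pauliZ_sq : pauliZ * pauliZ = 1 := by
  ext i j; fin_cases i <;> fin_cases j <;>
    simp [pauliZ, Matrix.mul_apply, Fin.sum_univ_two, Matrix.one_apply]

lemma pauli_pair (a b : Fin 2) :
    pauliZ ^ (a : ℕ) * pauliX ^ (b : ℕ) * (pauliX ^ (b : ℕ) * pauliZ ^ (a : ℕ)) = 1 := by
  fin_cases a <;> fin_cases b <;>
    simp only [Fin.val_zero, Fin.val_one, pow_zero, pow_one, one_mul, mul_one]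
  · exact pauliX_sq
  · exact pauliZ_sq
  · rw [mul_assoc, ← mul_assoc pauliX, pauliX_sq, one_mul, pauliZ_sq]

lemma Uphi_unitary (φ : ℝ) : (Uphi φ)ᴴ * Uphi φ = 1 := by
  have h2 : ((Real.sqrt 2 : ℂ))⁻¹ * ((Real.sqrt 2 : ℂ))⁻¹ * 2 = 1 := by
    rw [← mul_inv]; norm_cast
    rw [Real.mul_self_sqrt (by norm_num)]; norm_num
  have he : (starRingEnd ℂ) (Complex.exp (I * φ)) * Complex.exp (I * φ) = 1 := by
    rw [← Complex.exp_conj, ← Complex.exp_add]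
    simp [Complex.conj_I, Complex.conj_ofReal]
  ext i j
  fin_cases i <;> fin_cases j <;>
    simp [Uphi, Matrix.mul_apply, Fin.sum_univ_two, Matrix.one_apply,
      conjTranspose_apply] <;>
    first
      | linear_combination ((Real.sqrt 2 : ℂ))⁻¹ * ((Real.sqrt 2 : ℂ))⁻¹ * he + h2
      | linear_combination ((Real.sqrt 2 : ℂ))⁻¹ * ((Real.sqrt 2 : ℂ))⁻¹ * he

/-- Correctness of the quantum identity-based signature scheme: for every
`m ≥ 1`, signer key `T`, verifier key `T′`, and secret phase `φ`, the full
signing-and-verification pipeline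
`D_{T′} · E_{T′} · 𝒰ᴴ · D_T · E_T · 𝒰` equals the identity on `ℂ^{2^m}`,
so every honestly generated signature is accepted as valid. -/
theorem qibs_m_qubit_correctness (m : ℕ) (hm : 1 ≤ m)
    (T T' : Fin m → Fin 2 × Fin 2) (φ : ℝ) :
    qotpDec m T' * qotpEnc m T' * (UphiTensor m φ)ᴴ *
        qotpDec m T * qotpEnc m T * UphiTensor m φ =
      (1 : Matrix (Fin m → Fin 2) (Fin m → Fin 2) ℂ) := by
  have hd : ∀ S : Fin m → Fin 2 × Fin 2, qotpDec m S =
      qtensor m (fun j => pauliZ ^ ((S j).1 : ℕ) * pauliX ^ ((S j).2 : ℕ)) := fun _ => rfl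
  have he : ∀ S : Fin m → Fin 2 × Fin 2, qotpEnc m S =
      qtensor m (fun j => pauliX ^ ((S j).2 : ℕ) * pauliZ ^ ((S j).1 : ℕ)) := fun _ => rfl
  have hu : UphiTensor m φ = qtensor m (fun _ => Uphi φ) := rfl
  rw [hd, hd, he, he, hu, qtensor_conjTranspose, qtensor_mul, qtensor_mul,
    qtensor_mul, qtensor_mul, qtensor_mul, ← qtensor_one m]
  exact congrArg (qtensor m) (funext fun j => by
    rw [pauli_pair, one_mul, mul_assoc ((Uphi φ)ᴴ), pauli_pair, mul_one, Uphi_unitary])
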